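/- Let V_nat = ℂ(q)u₁ ⊕ ℂ(q)u₂ be the natural representation of U_q(sl₂) with Eu₂ = u₁, Fu₁ = u₂, Ku₁ = qu₁, Ku₂ = q⁻¹u₂, and let B = F + q⁻¹EK⁻¹. Let M be a module on which B acts, and v ∈ M with Bv = [a]v for a ∈ ℤ. Then on M ⊗ V_nat with B acting via Δ(B) = B ⊗ K⁻¹ + 1 ⊗ B, the vectors v ⊗ (u₁ ± q^{±a}u₂) are B-eigenvectors with eigenvalues [a ± 1]. -/

import Mathlib

noncomputable section

open TensorProduct

set_option maxHeartbeats 1000000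
set_option synthInstance.maxHeartbeats 1000000

/-- `K = ℂ(q)`. -/
abbrev Kq : Type := RatFunc ℂ

/-- The variable `q`. -/
def qq : Kq := RatFunc.X

/-- The quantum integer `[n] = (qⁿ − q⁻ⁿ)/(q − q⁻¹)`. -/
noncomputable def qint (n : ℤ) : Kq := (qq ^ n - qq ^ (-n)) / (qq - qq⁻¹)

/-- The natural representation `V_nat = ℂ(q)u₁ ⊕ ℂ(q)u₂` of `U_q(sl₂)`. -/
abbrev Vnat : Type := Kq × Kq

def u1 : Vnat := (1, 0)
def u2 : Vnat := (0, 1)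

/-- `E` on `V_nat`: `Eu₂ = u₁`, `Eu₁ = 0`. -/
def Enat : Vnat →ₗ[Kq] Vnat := (LinearMap.fst Kq Kq Kq).prod 0 ∘ₗ
  (LinearMap.snd Kq Kq Kq).prod (LinearMap.fst Kq Kq Kq)

/-- `F` on `V_nat`: `Fu₁ = u₂`, `Fu₂ = 0`. -/
def Fnat : Vnat →ₗ[Kq] Vnat := (0 : Vnat →ₗ[Kq] Kq).prod (LinearMap.fst Kq Kq Kq)

/-- `K` on `V_nat`: `Ku₁ = qu₁`, `Ku₂ = q⁻¹u₂`. -/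
def Knat : Vnat →ₗ[Kq] Vnat :=
  (qq • LinearMap.fst Kq Kq Kq).prod (qq⁻¹ • LinearMap.snd Kq Kq Kq)

/-- `K⁻¹` on `V_nat`. -/
def Kinvnat : Vnat →ₗ[Kq] Vnat :=
  (qq⁻¹ • LinearMap.fst Kq Kq Kq).prod (qq • LinearMap.snd Kq Kq Kq)

/-- `B = F + q⁻¹EK⁻¹` acting on `V_nat`. -/
def Bnat : Vnat →ₗ[Kq] Vnat := Fnat + qq⁻¹ • (Enat ∘ₗ Kinvnat)

/-!
On `v ⊗ w` with `Bv = [a]v`, the coproduct `Δ(B) = B ⊗ K⁻¹ + 1 ⊗ B` acts as `v ⊗ ([a]K⁻¹ + B)w`,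
so the claim reduces to a `2 × 2` eigenvector computation on `V_nat`, where `B` is the swap
`u₁ ↔ u₂`. The resulting identities are the cases `n = ±1` of
`[m + n] = q⁻ⁿ[m] + qᵐ[n]`, which already holds for the numerators `qᵏ − q⁻ᵏ`.
-/

lemma zpow_add_sub_zpow_neg_add {F : Type*} [Field F] {q : F} (hq : q ≠ 0) (m n : ℤ) :
    q ^ (m + n) - q ^ (-(m + n)) = q ^ (-n) * (q ^ m - q ^ (-m)) + q ^ m * (q ^ n - q ^ (-n)) := by
  simp only [neg_add, zpow_add₀ hq, zpow_neg]
  ring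

lemma TensorProduct.map_add_map_id_tmul_of_apply_eq_smul {R M N : Type*} [CommSemiring R]
    [AddCommMonoid M] [AddCommMonoid N] [Module R M] [Module R N]
    (f : M →ₗ[R] M) (g h : N →ₗ[R] N) {v : M} {c : R} (hv : f v = c • v) (w : N) :
    (TensorProduct.map f g + TensorProduct.map (LinearMap.id : M →ₗ[R] M) h) (v ⊗ₜ[R] w) =
      v ⊗ₜ[R] (c • g w + h w) := by
  rw [LinearMap.add_apply, map_tmul, map_tmul, hv, LinearMap.id_apply, smul_tmul, tmul_add]

lemma qq_ne_zero : qq ≠ 0 := RatFunc.X_ne_zero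

lemma qq_sub_inv_ne_zero : qq - qq⁻¹ ≠ 0 := by
  intro h
  have hsq : qq * qq = 1 := by
    nth_rewrite 2 [sub_eq_zero.mp h]
    exact mul_inv_cancel₀ qq_ne_zero
  -- `q = ±1` would make `q` algebraic over `ℂ`.
  obtain hq | hq := mul_self_eq_one_iff.mp hsq <;> apply RatFunc.transcendental_X (K := ℂ) <;>
    rw [← qq, hq]
  exacts [isAlgebraic_one, isAlgebraic_one.neg]

lemma qint_add (m n : ℤ) : qint (m + n) = qq ^ (-n) * qint m + qq ^ m * qint n := by
  simp only [qint, zpow_add_sub_zpow_neg_add qq_ne_zero, add_div, mul_div_assoc]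

lemma qint_one : qint 1 = 1 := by
  simp only [qint, zpow_one, zpow_neg, div_self qq_sub_inv_ne_zero]

lemma qint_neg (n : ℤ) : qint (-n) = -qint n := by
  simp only [qint, neg_neg, ← neg_div, neg_sub]

lemma qint_add_one (n : ℤ) : qint (n + 1) = qq⁻¹ * qint n + qq ^ n := by
  rw [qint_add, qint_one, zpow_neg_one, mul_one]

lemma qint_add_one' (n : ℤ) : qint (n + 1) = qq * qint n + qq ^ (-n) := by
  rw [add_comm, qint_add, qint_one, zpow_one, mul_one, add_comm]

lemma qint_sub_one (n : ℤ) : qint (n - 1) = qq⁻¹ * qint n - qq ^ (-n) := by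
  rw [sub_eq_neg_add, qint_add, qint_neg, qint_one, zpow_neg_one, mul_neg_one, add_comm,
    sub_eq_add_neg]

lemma qint_sub_one' (n : ℤ) : qint (n - 1) = qq * qint n - qq ^ n := by
  rw [sub_eq_add_neg, qint_add, qint_neg, qint_one, neg_neg, zpow_one, mul_neg_one,
    sub_eq_add_neg]

lemma Kinvnat_apply (w : Vnat) : Kinvnat w = (qq⁻¹ * w.1, qq * w.2) := rfl

lemma Bnat_apply (w : Vnat) : Bnat w = w.swap := by
  ext <;> simp [Bnat, Fnat, Enat, Kinvnat, inv_mul_cancel_left₀ qq_ne_zero]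

lemma smul_Kinvnat_add_Bnat (c : Kq) (w : Vnat) :
    c • Kinvnat w + Bnat w = (c * qq⁻¹ * w.1 + w.2, c * qq * w.2 + w.1) := by
  rw [Kinvnat_apply, Bnat_apply, Prod.smul_mk, Prod.swap, Prod.mk_add_mk, smul_eq_mul,
    smul_eq_mul, mul_assoc, mul_assoc]

lemma u1_add_smul_u2 (t : Kq) : u1 + t • u2 = (1, t) := by
  simp [u1, u2]

lemma u1_sub_smul_u2 (t : Kq) : u1 - t • u2 = (1, -t) := by
  simp [u1, u2]

lemma qint_smul_Kinvnat_add_Bnat_u1_add (a : ℤ) :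
    qint a • Kinvnat (u1 + qq ^ a • u2) + Bnat (u1 + qq ^ a • u2)
      = qint (a + 1) • (u1 + qq ^ a • u2) := by
  have hqa : qq ^ a * qq ^ (-a) = 1 := by rw [← zpow_add₀ qq_ne_zero, add_neg_cancel, zpow_zero]
  rw [u1_add_smul_u2, smul_Kinvnat_add_Bnat, Prod.smul_mk, smul_eq_mul, smul_eq_mul, Prod.mk.injEq]
  constructor
  · rw [qint_add_one]
    ring
  · rw [qint_add_one']
    linear_combination -hqa

lemma qint_smul_Kinvnat_add_Bnat_u1_sub (a : ℤ) :
    qint a • Kinvnat (u1 - qq ^ (-a) • u2) + Bnat (u1 - qq ^ (-a) • u2)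
      = qint (a - 1) • (u1 - qq ^ (-a) • u2) := by
  have hqa : qq ^ a * qq ^ (-a) = 1 := by rw [← zpow_add₀ qq_ne_zero, add_neg_cancel, zpow_zero]
  rw [u1_sub_smul_u2, smul_Kinvnat_add_Bnat, Prod.smul_mk, smul_eq_mul, smul_eq_mul, Prod.mk.injEq]
  constructor
  · rw [qint_sub_one]
    ring
  · rw [qint_sub_one']
    linear_combination -hqa

/-- If `Bv = [a]v`, then on `M ⊗ V_nat`, with `B` acting via
`Δ(B) = B ⊗ K⁻¹ + 1 ⊗ B`, the vectors `v ⊗ (u₁ ± q^{±a}u₂)` are `B`-eigenvectors of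
eigenvalues `[a ± 1]`. -/
theorem statement8 (M : Type) [AddCommGroup M] [Module Kq M]
    (BM : M →ₗ[Kq] M) (v : M) (a : ℤ) (hv : BM v = qint a • v) :
    (TensorProduct.map BM Kinvnat + TensorProduct.map (LinearMap.id : M →ₗ[Kq] M) Bnat)
        (v ⊗ₜ[Kq] (u1 + qq ^ a • u2)) =
      qint (a + 1) • (v ⊗ₜ[Kq] (u1 + qq ^ a • u2)) ∧
    (TensorProduct.map BM Kinvnat + TensorProduct.map (LinearMap.id : M →ₗ[Kq] M) Bnat)
        (v ⊗ₜ[Kq] (u1 - qq ^ (-a) • u2)) =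
      qint (a - 1) • (v ⊗ₜ[Kq] (u1 - qq ^ (-a) • u2)) := by
  simp only [TensorProduct.map_add_map_id_tmul_of_apply_eq_smul _ _ _ hv, ← tmul_smul,
    qint_smul_Kinvnat_add_Bnat_u1_add, qint_smul_Kinvnat_add_Bnat_u1_sub, and_self]

end
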